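/- arXiv:0906.1606 — 5 statements merged into one kernel-verified Lean document; each statement's English description precedes it below -/
import Mathlib

section
/- If H is a finite index subgroup of a group K, x is an element of H, and the H-conjugacy class x^H = {h⁻¹xh : h ∈ H} is closed in the profinite topology on H, then the K-conjugacy class x^K is closed in the profinite topology on K. -/
/-- A subset `S` of a group is closed in the profinite topology: for every element outside `S`
there is a finite index normal subgroup whose coset around that element misses `S`. -/
def ProfClosed {G : Type*} [Group G] (S : Set G) : Prop :=
  ∀ x ∉ S, ∃ N : Subgroup G, N.Normal ∧ N.FiniteIndex ∧ ∀ n ∈ N, x * n ∉ S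

/-!
With `r_q` running over representatives of the cosets `K ⧸ H`, every `K`-conjugate of `x` is
the `r_q`-conjugate of an `H`-conjugate of `x`, so `x^K` is the finite union of the sets
`r_q x^H r_q⁻¹`. Each of these is closed in `K`: a closed subset of the finite-index subgroup `H`
stays closed in `K` (the normal core in `K` of a finite-index subgroup of `H` has finite index in
`K`), and preimages under homomorphisms, in particular under conjugations, of closed sets are
closed.
-/

namespace ProfClosed

variable {G : Type*} [Group G]

theorem preimage {G' F : Type*} [Group G'] [FunLike F G G'] [MonoidHomClass F G G'] {S : Set G'}
    (hS : ProfClosed S) (f : F) : ProfClosed (f ⁻¹' S) := by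
  intro x hx
  obtain ⟨N, hNnormal, hNfin, hN⟩ := hS (f x) hx
  refine ⟨N.comap f, hNnormal.comap _, ⟨?_⟩, fun n hn => ?_⟩
  · rw [Subgroup.index_comap]
    exact Subgroup.FiniteIndex.index_ne_zero
  · simpa using hN (f n) hn

theorem iUnion {ι : Type*} [Finite ι] {S : ι → Set G} (hS : ∀ i, ProfClosed (S i)) :
    ProfClosed (⋃ i, S i) := by
  intro x hx
  simp only [Set.mem_iUnion, not_exists] at hx ⊢
  choose N hNnormal hNfin hN using fun i => hS i x (hx i)
  exact ⟨⨅ i, N i, Subgroup.normal_iInf_normal hNnormal, Subgroup.finiteIndex_iInf hNfin,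
    fun n hn i => hN i n (Subgroup.mem_iInf.mp hn i)⟩

theorem image_subtype {H : Subgroup G} [H.FiniteIndex] {S : Set H} (hS : ProfClosed S) :
    ProfClosed (((↑) : H → G) '' S) := by
  intro y hy
  by_cases hyH : y ∈ H
  · have hyS : (⟨y, hyH⟩ : H) ∉ S := fun h => hy ⟨_, h, rfl⟩
    obtain ⟨N, -, hNfin, hN⟩ := hS _ hyS
    have : (N.map H.subtype).FiniteIndex :=
      ⟨by rw [Subgroup.index_map_subtype]; exact mul_ne_zero hNfin.index_ne_zero Subgroup.FiniteIndex.index_ne_zero⟩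
    refine ⟨(N.map H.subtype).normalCore, Subgroup.normalCore_normal _, inferInstance, ?_⟩
    rintro _ hn ⟨z, hz, hzy⟩
    obtain ⟨m, hm, rfl⟩ := Subgroup.normalCore_le _ hn
    have hz' : z = ⟨y, hyH⟩ * m := Subtype.ext hzy
    exact hN m hm (hz' ▸ hz)
  · refine ⟨H.normalCore, Subgroup.normalCore_normal _, inferInstance, ?_⟩
    rintro n hn ⟨z, -, hzy⟩
    refine hyH ?_
    simpa using mul_mem (hzy ▸ z.2 : y * n ∈ H) (inv_mem (Subgroup.normalCore_le H hn))

end ProfClosed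

theorem setOf_exists_eq_inv_mul_mul_eq_conjugatesOf {G : Type*} [Group G] (a : G) :
    {y | ∃ g : G, y = g⁻¹ * a * g} = conjugatesOf a := by
  ext y
  change _ ↔ IsConj a y
  rw [isConj_iff]
  constructor
  · rintro ⟨g, rfl⟩
    exact ⟨g⁻¹, by group⟩
  · rintro ⟨c, rfl⟩
    exact ⟨c⁻¹, by group⟩

theorem conjugatesOf_eq_iUnion_preimage_conj {G : Type*} [Group G] (H : Subgroup G) (a : H) :
    conjugatesOf (a : G) =
      ⋃ q : G ⧸ H, MulAut.conj q.out⁻¹ ⁻¹' (((↑) : H → G) '' conjugatesOf a) := by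
  ext y
  simp only [Set.mem_iUnion, Set.mem_preimage, Set.mem_image, MulAut.conj_apply]
  constructor
  · rintro hy
    obtain ⟨g, rfl⟩ := isConj_iff.mp hy
    obtain ⟨h, hh⟩ := QuotientGroup.mk_out_eq_mul H g
    refine ⟨g, h⁻¹ * a * h, isConj_iff.mpr ⟨h⁻¹, by group⟩, ?_⟩
    rw [hh]
    push_cast
    group
  · rintro ⟨q, z, hz, hzy⟩
    refine (H.subtype.map_isConj hz).trans (isConj_iff.mpr ⟨q.out, ?_⟩)
    rw [Subgroup.coe_subtype, hzy]
    group

theorem conjClass_closed_of_finiteIndex {K : Type*} [Group K] (H : Subgroup K)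
    (hfi : H.FiniteIndex) (x : H)
    (hH : ProfClosed {y : H | ∃ h : H, y = h⁻¹ * x * h}) :
    ProfClosed {y : K | ∃ k : K, y = k⁻¹ * (x : K) * k} := by
  rw [setOf_exists_eq_inv_mul_mul_eq_conjugatesOf] at hH ⊢
  rw [conjugatesOf_eq_iUnion_preimage_conj H x]
  exact ProfClosed.iUnion fun q => hH.image_subtype.preimage _
end

section
/- If G₁ and G₂ are hereditarily conjugacy separable groups, then the direct product G₁ × G₂ is hereditarily conjugacy separable. -/
/-- A group is conjugacy separable if any two non-conjugate elements have non-conjugate images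
in some finite quotient. -/
def ConjugacySeparable (G : Type*) [Group G] : Prop :=
  ∀ x y : G, ¬ IsConj x y →
    ∃ (Q : Type) (_ : Group Q) (_ : Finite Q) (φ : G →* Q), ¬ IsConj (φ x) (φ y)

/-- A group is hereditarily conjugacy separable if every finite index subgroup is
conjugacy separable. -/
def HereditarilyConjugacySeparable (G : Type*) [Group G] : Prop :=
  ∀ H : Subgroup G, H.FiniteIndex → ConjugacySeparable H

/-!
Call a subset of a group profinitely closed if every point outside it stays outside it in some
finite quotient. A group is conjugacy separable exactly when its conjugacy classes are
profinitely closed, and closedness passes to subgroups, so for `H` of finite index in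
`G₁ × G₂` it suffices that every `H`-orbit under conjugation is closed in `G₁ × G₂`. `H` contains a product `N₁ × N₂` of finite-index normal subgroups,
so an `H`-orbit is a finite union of `N₁ × N₂`-orbits, and these are products of an
`N₁`-orbit and an `N₂`-orbit. Finally an `N`-orbit of `z` is the conjugacy class of `z` in the
finite-index subgroup `N ⊔ ⟨z⟩`, which is closed by hereditary conjugacy separability.
-/

open Pointwise

section

variable {G : Type*} [Group G]

def IsProfinitelyClosed (S : Set G) : Prop :=
  ∀ y ∉ S, ∃ L : FiniteIndexNormalSubgroup G, y ∉ S * (L : Set G)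

namespace IsProfinitelyClosed

theorem preimage {K : Type*} [Group K] (f : G →* K) {S : Set K} (hS : IsProfinitelyClosed S) :
    IsProfinitelyClosed (f ⁻¹' S) := by
  intro y hy
  obtain ⟨L, hL⟩ := hS (f y) hy
  refine ⟨L.comap f, ?_⟩
  rintro ⟨s, hs, l, hl, rfl⟩
  exact hL ⟨f s, hs, f l, hl, (map_mul f s l).symm⟩

theorem inter {S T : Set G} (hS : IsProfinitelyClosed S) (hT : IsProfinitelyClosed T) :
    IsProfinitelyClosed (S ∩ T) := by
  intro y hy
  rcases not_and_or.mp hy with hyS | hyT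
  · obtain ⟨L, hL⟩ := hS y hyS
    exact ⟨L, fun h => hL (Set.mul_subset_mul_right Set.inter_subset_left h)⟩
  · obtain ⟨L, hL⟩ := hT y hyT
    exact ⟨L, fun h => hL (Set.mul_subset_mul_right Set.inter_subset_right h)⟩

theorem prod {G₁ G₂ : Type*} [Group G₁] [Group G₂] {S₁ : Set G₁} {S₂ : Set G₂}
    (h₁ : IsProfinitelyClosed S₁) (h₂ : IsProfinitelyClosed S₂) :
    IsProfinitelyClosed (S₁ ×ˢ S₂) :=
  (h₁.preimage (MonoidHom.fst G₁ G₂)).inter (h₂.preimage (MonoidHom.snd G₁ G₂))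

theorem iUnion {ι : Type*} [Finite ι] {S : ι → Set G} (h : ∀ i, IsProfinitelyClosed (S i)) :
    IsProfinitelyClosed (⋃ i, S i) := by
  intro y hy
  choose L hL using fun i => h i y fun hyi => hy (Set.mem_iUnion_of_mem i hyi)
  have : (⨅ i, (L i : Subgroup G)).Normal := Subgroup.normal_iInf_normal fun i => inferInstance
  have := Subgroup.finiteIndex_iInf fun i => (L i).isFiniteIndex'
  refine ⟨.ofSubgroup (⨅ i, (L i : Subgroup G)), ?_⟩
  rintro ⟨s, hs, l, hl, rfl⟩
  obtain ⟨i, hsi⟩ := Set.mem_iUnion.mp hs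
  exact hL i ⟨s, hsi, l, Subgroup.mem_iInf.mp hl i, rfl⟩

theorem image_subtype {D : Subgroup G} [D.FiniteIndex] {S : Set D}
    (hS : IsProfinitelyClosed S) : IsProfinitelyClosed (((↑) : D → G) '' S) := by
  intro y hy
  by_cases hyD : y ∈ D
  · obtain ⟨M, hM⟩ := hS ⟨y, hyD⟩ fun h => hy ⟨_, h, rfl⟩
    have : ((M : Subgroup D).map D.subtype).FiniteIndex := ⟨by
      rw [Subgroup.index_map_subtype]
      exact mul_ne_zero Subgroup.FiniteIndex.index_ne_zero Subgroup.FiniteIndex.index_ne_zero⟩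
    refine ⟨.ofSubgroup ((M : Subgroup D).map D.subtype).normalCore, ?_⟩
    rintro ⟨_, ⟨s, hs, rfl⟩, l, hl, hsl⟩
    obtain ⟨m, hm, rfl⟩ := Subgroup.normalCore_le _ hl
    exact hM ⟨s, hs, m, hm, Subtype.ext hsl⟩
  · refine ⟨.ofSubgroup D.normalCore, ?_⟩
    rintro ⟨_, ⟨s, -, rfl⟩, l, hl, rfl⟩
    exact hyD (D.mul_mem s.2 (D.normalCore_le hl))

end IsProfinitelyClosed

theorem conjugacySeparable_iff_isProfinitelyClosed_conjugatesOf :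
    ConjugacySeparable G ↔ ∀ x : G, IsProfinitelyClosed (conjugatesOf x) := by
  constructor
  · intro hG x y hxy
    obtain ⟨Q, _, _, φ, hφ⟩ := hG x y hxy
    refine ⟨.ofSubgroup φ.ker, ?_⟩
    rintro ⟨c, hc, l, hl, rfl⟩
    apply hφ
    rw [map_mul, MonoidHom.mem_ker.mp hl, mul_one]
    exact φ.map_isConj hc
  · intro h x y hxy
    obtain ⟨L, hL⟩ := h x y hxy
    obtain ⟨Q, _, _, ⟨e⟩⟩ :=
      Finite.exists_type_univ_nonempty_mulEquiv.{_, 0} (G ⧸ (L : Subgroup G))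
    refine ⟨Q, _, inferInstance, e.toMonoidHom.comp (QuotientGroup.mk' (L : Subgroup G)),
      fun hconj => hL ?_⟩
    have hmk : IsConj (x : G ⧸ (L : Subgroup G)) y := by
      simpa only [MonoidHom.comp_apply, MulEquiv.coe_toMonoidHom, MulEquiv.symm_apply_apply,
        QuotientGroup.mk'_apply] using e.symm.toMonoidHom.map_isConj hconj
    obtain ⟨c, hc⟩ := isConj_iff.mp hmk
    obtain ⟨g, rfl⟩ := QuotientGroup.mk_surjective c
    have hgx : IsConj x (g * x * g⁻¹) := isConj_iff.mpr ⟨g, rfl⟩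
    exact ⟨_, hgx, _, QuotientGroup.eq.mp hc, mul_inv_cancel_left _ _⟩

namespace Subgroup

instance finiteIndex_prod {G' : Type*} [Group G'] (H : Subgroup G) (K : Subgroup G')
    [H.FiniteIndex] [K.FiniteIndex] : (H.prod K).FiniteIndex :=
  ⟨by rw [index_prod]; exact mul_ne_zero FiniteIndex.index_ne_zero FiniteIndex.index_ne_zero⟩

def conjOrbit (H : Subgroup G) (x : G) : Set G :=
  {y | ∃ h ∈ H, h * x * h⁻¹ = y}

theorem preimage_subtype_conjOrbit (H : Subgroup G) (x : H) :
    H.subtype ⁻¹' H.conjOrbit x = conjugatesOf x := by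
  ext y
  simp [conjOrbit, conjugatesOf, isConj_iff, Subtype.ext_iff]

theorem conjOrbit_prod {G₁ G₂ : Type*} [Group G₁] [Group G₂] (N₁ : Subgroup G₁)
    (N₂ : Subgroup G₂) (z : G₁ × G₂) :
    (N₁.prod N₂).conjOrbit z = N₁.conjOrbit z.1 ×ˢ N₂.conjOrbit z.2 := by
  ext ⟨a, b⟩
  simp only [conjOrbit, Set.mem_prod, Set.mem_ofPred_eq, Prod.exists, Prod.ext_iff, mem_prod]
  aesop

theorem conjOrbit_eq_iUnion {N H : Subgroup G} [N.Normal] (hNH : N ≤ H) (x : G) :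
    H.conjOrbit x = ⋃ q : H ⧸ N.subgroupOf H,
      N.conjOrbit ((q.out : G) * x * (q.out : G)⁻¹) := by
  ext y
  simp only [conjOrbit, Set.mem_iUnion, Set.mem_ofPred_eq]
  constructor
  · rintro ⟨h, hh, rfl⟩
    set q : H ⧸ N.subgroupOf H := QuotientGroup.mk ⟨h, hh⟩
    have hq : (q.out : G)⁻¹ * h ∈ N := mem_subgroupOf.mp (QuotientGroup.eq.mp q.out_eq')
    exact ⟨q, h * (q.out : G)⁻¹, Normal.mem_comm inferInstance hq, by group⟩
  · rintro ⟨q, n, hn, rfl⟩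
    exact ⟨n * q.out, H.mul_mem (hNH hn) q.out.2, by group⟩

theorem conjOrbit_eq_image_conjugatesOf (N : Subgroup G) [N.Normal] (z : G) :
    N.conjOrbit z =
      ((↑) : ↥(N ⊔ zpowers z) → G) '' conjugatesOf ⟨z, mem_sup_right (mem_zpowers z)⟩ := by
  ext y
  constructor
  · rintro ⟨n, hn, rfl⟩
    exact ⟨_, isConj_iff.mpr ⟨⟨n, mem_sup_left hn⟩, rfl⟩, rfl⟩
  · rintro ⟨_, hc, rfl⟩
    obtain ⟨⟨d, hd⟩, rfl⟩ := isConj_iff.mp hc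
    -- `N ⊔ ⟨z⟩ = N * ⟨z⟩` as `N` is normal, and the `⟨z⟩`-part centralizes `z`.
    obtain ⟨n, hn, _, ⟨i, rfl⟩, rfl⟩ : d ∈ (N : Set G) * zpowers z := by rwa [← normal_mul]
    exact ⟨n, hn, by simp only [coe_mul, coe_inv]; group⟩

end Subgroup

theorem HereditarilyConjugacySeparable.isProfinitelyClosed_conjOrbit
    (hG : HereditarilyConjugacySeparable G) (N : Subgroup G) [N.Normal] [N.FiniteIndex] (z : G) :
    IsProfinitelyClosed (N.conjOrbit z) := by
  have : (N ⊔ Subgroup.zpowers z).FiniteIndex := Subgroup.finiteIndex_of_le le_sup_left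
  rw [N.conjOrbit_eq_image_conjugatesOf z]
  exact (conjugacySeparable_iff_isProfinitelyClosed_conjugatesOf.mp (hG _ this) _).image_subtype

end

theorem prod_hereditarilyConjugacySeparable {G₁ G₂ : Type*} [Group G₁] [Group G₂]
    (h₁ : HereditarilyConjugacySeparable G₁) (h₂ : HereditarilyConjugacySeparable G₂) :
    HereditarilyConjugacySeparable (G₁ × G₂) := by
  intro H hH
  refine conjugacySeparable_iff_isProfinitelyClosed_conjugatesOf.mpr fun x => ?_
  let N := FiniteIndexNormalSubgroup.ofSubgroup H.normalCore
  let N₁ := N.comap (MonoidHom.inl G₁ G₂)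
  let N₂ := N.comap (MonoidHom.inr G₁ G₂)
  have hN : (N₁ : Subgroup G₁).prod N₂ ≤ H := by
    rintro ⟨a, b⟩ hab
    have hab' : (a, (1 : G₂)) * ((1 : G₁), b) ∈ N :=
      mul_mem (Subgroup.mem_prod.mp hab).1 (Subgroup.mem_prod.mp hab).2
    simpa using H.normalCore_le hab'
  have hclosed : IsProfinitelyClosed (H.conjOrbit x) := by
    rw [Subgroup.conjOrbit_eq_iUnion hN]
    refine IsProfinitelyClosed.iUnion fun q => ?_
    rw [Subgroup.conjOrbit_prod]
    exact (h₁.isProfinitelyClosed_conjOrbit N₁ _).prod (h₂.isProfinitelyClosed_conjOrbit N₂ _)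
  simpa only [Subgroup.preimage_subtype_conjOrbit] using hclosed.preimage H.subtype
end

section
/- A direct product of two conjugacy separable groups is conjugacy separable. -/
theorem prod_conjugacySeparable {G₁ G₂ : Type*} [Group G₁] [Group G₂]
    (h₁ : ConjugacySeparable G₁) (h₂ : ConjugacySeparable G₂) :
    ConjugacySeparable (G₁ × G₂) := by
  rintro ⟨x₁, x₂⟩ ⟨y₁, y₂⟩ h
  have key : ¬ IsConj x₁ y₁ ∨ ¬ IsConj x₂ y₂ := by
    by_contra hc
    push_neg at hc
    obtain ⟨⟨c₁, hc₁⟩, ⟨c₂, hc₂⟩⟩ := hc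
    refine h ⟨⟨(↑c₁, ↑c₂), (↑c₁⁻¹, ↑c₂⁻¹), ?_, ?_⟩, ?_⟩
    · exact Prod.ext (by simp) (by simp)
    · exact Prod.ext (by simp) (by simp)
    · exact Prod.ext hc₁ hc₂
  rcases key with hk | hk
  · obtain ⟨Q, _, _, φ, hφ⟩ := h₁ x₁ y₁ hk
    exact ⟨Q, ‹_›, ‹_›, φ.comp (MonoidHom.fst G₁ G₂), hφ⟩
  · obtain ⟨Q, _, _, φ, hφ⟩ := h₂ x₂ y₂ hk
    exact ⟨Q, ‹_›, ‹_›, φ.comp (MonoidHom.snd G₁ G₂), hφ⟩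
end

section
/- A retract of a conjugacy separable group is conjugacy separable. That is, if G is conjugacy separable and ρ : G → G is an endomorphism with ρ ∘ ρ = ρ, then the image ρ(G) is conjugacy separable. -/
theorem retract_conjugacySeparable {G : Type*} [Group G] (hG : ConjugacySeparable G)
    (ρ : G →* G) (hρ : ρ.comp ρ = ρ) : ConjugacySeparable ρ.range := by
  intro x y hxy
  have hfix : ∀ z : G, z ∈ ρ.range → ρ z = z := by
    rintro z ⟨a, rfl⟩
    have := DFunLike.congr_fun hρ a
    simpa using this
  have hG' : ¬ IsConj (x : G) (y : G) := by
    rw [isConj_iff]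
    rintro ⟨g, hg⟩
    apply hxy
    rw [isConj_iff]
    refine ⟨⟨ρ g, g, rfl⟩, ?_⟩
    have : ρ g * (x : G) * (ρ g)⁻¹ = (y : G) := by
      have := congrArg ρ hg
      rw [map_mul, map_mul, map_inv, hfix x x.2, hfix y y.2] at this
      exact this
    exact Subtype.ext this
  obtain ⟨Q, _, _, φ, hφ⟩ := hG _ _ hG'
  exact ⟨Q, ‹_›, ‹_›, φ.comp ρ.range.subtype, hφ⟩
end

section
/- If Q is a cyclic subgroup separable group, then for every a ∈ Q the double coset ⟨(a,1)⟩D is closed in the profinite topology on Q × Q, where D is the diagonal subgroup of Q × Q. -/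
open Pointwise

/-- A group is cyclic subgroup separable if every cyclic subgroup is closed in the
profinite topology. -/
def CyclicSubgroupSeparable (Q : Type*) [Group Q] : Prop :=
  ∀ g : Q, ProfClosed (↑(Subgroup.zpowers g) : Set Q)

/-! The double coset `⟨(a,1)⟩D` is the preimage of `⟨a⟩` under `(x, y) ↦ x y⁻¹`. Moving `(x, y)`
by `(n₁, n₂) ∈ N × N` moves `x y⁻¹` by the conjugate `y (n₁ n₂⁻¹) y⁻¹`, which stays in `N` when
`N` is normal; so `N × N` separates `(x, y)` from the double coset whenever `N` separates
`x y⁻¹` from `⟨a⟩`. -/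

section

variable {G : Type*} [Group G]

theorem ProfClosed.setOf_mul_inv_mem {S : Set G} (hS : ProfClosed S) :
    ProfClosed {x : G × G | x.1 * x.2⁻¹ ∈ S} := by
  intro x hx
  obtain ⟨N, hN, hNfi, hNS⟩ := hS _ hx
  refine ⟨N.prod N, inferInstance, inferInstance, ?_⟩
  rintro ⟨n₁, n₂⟩ ⟨hn₁, hn₂⟩
  have hshift : (x * (n₁, n₂)).1 * (x * (n₁, n₂)).2⁻¹
      = x.1 * x.2⁻¹ * (x.2 * (n₁ * n₂⁻¹) * x.2⁻¹) := by
    simp only [Prod.fst_mul, Prod.snd_mul]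
    group
  simpa only [Set.mem_ofPred_eq, hshift] using
    hNS _ (hN.conj_mem _ (N.mul_mem hn₁ (N.inv_mem hn₂)) x.2)

theorem prod_one_mul_setOf_fst_eq_snd (S : Set G) :
    S ×ˢ {1} * {q : G × G | q.1 = q.2} = {x : G × G | x.1 * x.2⁻¹ ∈ S} := by
  ext ⟨x, y⟩
  constructor
  · rintro ⟨⟨s, _⟩, ⟨hs, rfl⟩, ⟨z, w⟩, hzw, hxy⟩
    obtain rfl : z = w := hzw
    simp_all [← hxy]
  · intro h
    exact ⟨(x * y⁻¹, 1), ⟨h, rfl⟩, (y, y), rfl, by simp⟩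

theorem coe_zpowers_mk_one (a : G) :
    (Subgroup.zpowers (a, (1 : G)) : Set (G × G)) = (Subgroup.zpowers a : Set G) ×ˢ {1} := by
  ext ⟨x, y⟩
  simp [Subgroup.mem_zpowers_iff, Prod.ext_iff, eq_comm]

end

theorem cyclic_mul_diagonal_closed {Q : Type*} [Group Q] (hQ : CyclicSubgroupSeparable Q) :
    ∀ a : Q,
      ProfClosed ((↑(Subgroup.zpowers ((a, (1 : Q)))) : Set (Q × Q))
        * {q : Q × Q | q.1 = q.2}) := by
  intro a
  rw [coe_zpowers_mk_one, prod_one_mul_setOf_fst_eq_snd]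
  exact (hQ a).setOf_mul_inv_mem
end
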